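/- Assume 2 is a non-zero-divisor in k. Then the centralizer of ker ∂ in R equals the k-subalgebra C generated by x₁² and x₂²: {c ∈ R : a·c = c·a for all a ∈ ker ∂} = C. Consequently, every additive map ξ : R → R that is left R^s-linear (ξ(a·m) = a·ξ(m) for all a ∈ ker ∂, m ∈ R) and right R-linear (ξ(m·r) = ξ(m)·r for all m, r ∈ R) is left multiplication by a unique element of C; that is, the endomorphisms of R as an (R^s, R)-bimodule are in bijection with elements of the center of R. -/

import Mathlib

/-!
Only two elements of `ker ∂` are needed: `x₁x₂` and `x₁ - x₂`. To compute with them, `R` acts on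
`k[X₁, X₂]` by `x₁ ↦ X₁ ·` and `x₂ ↦ X₂ · σ₁`, where `σᵢ` negates `Xᵢ`. Evaluation at `1` is a
linear bijection `R ≃ k[X₁, X₂]` taking `x₁ᵃ x₂ᵇ` to `X₁ᵃ X₂ᵇ`, and it turns right multiplication by
`x₁` and `x₂` into `X₁ · σ₂` and `X₂ ·`, because these operators commute with the action.
If `p` is the image of `c`, then `c` commuting with `x₁x₂` gives `σ₁ p = σ₂ p`. Commuting with
`x₁ - x₂` then gives `(X₁ + X₂)(p - σ₁ p) = 0`, so both sign changes fix `p`. Since `2` is a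
non-zero-divisor, only even exponents occur in `p`, that is, `c ∈ k[x₁², x₂²]`. Conversely,
`x₁²` and `x₂²` are central. A bimodule endomorphism `ξ` is left multiplication by `ξ 1`, and
`ξ 1` commutes with `ker ∂`.
-/

/-- The anticommutation relation `x₁x₂ + x₂x₁ = 0` on the free `k`-algebra
on two generators. -/
inductive OddRel (k : Type*) [CommRing k] :
    FreeAlgebra k (Fin 2) → FreeAlgebra k (Fin 2) → Prop
  | anticomm : OddRel k
      (FreeAlgebra.ι k (0 : Fin 2) * FreeAlgebra.ι k (1 : Fin 2) +
        FreeAlgebra.ι k (1 : Fin 2) * FreeAlgebra.ι k (0 : Fin 2)) 0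

/-- The `k`-algebra of skew polynomials in two variables,
`R = k⟨x₁,x₂⟩/(x₁x₂ + x₂x₁)`. -/
abbrev OddPoly (k : Type*) [CommRing k] := RingQuot (OddRel k)

/-- The generators `x₁ = X k 0` and `x₂ = X k 1` of `R`. -/
noncomputable def X (k : Type*) [CommRing k] (i : Fin 2) : OddPoly k :=
  RingQuot.mkAlgHom k (OddRel k) (FreeAlgebra.ι k i)

namespace MvPolynomial

variable {σ R : Type*} [CommRing R]

noncomputable def scaleVars (u : σ → R) : MvPolynomial σ R →ₐ[R] MvPolynomial σ R :=
  aeval fun j => C (u j) * X j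

@[simp] lemma scaleVars_X (u : σ → R) (j : σ) : scaleVars u (X j) = C (u j) * X j :=
  aeval_X _ _

lemma scaleVars_monomial (u : σ → R) (d : σ →₀ ℕ) (c : R) :
    scaleVars u (monomial d c) = monomial d ((d.prod fun j e => u j ^ e) * c) := by
  simp only [scaleVars, aeval_monomial, mul_pow, Finsupp.prod_mul, ← map_pow, ← map_finsuppProd]
  rw [monomial_eq, algebraMap_eq, C_mul]
  ring

lemma coeff_scaleVars (u : σ → R) (d : σ →₀ ℕ) (p : MvPolynomial σ R) :
    coeff d (scaleVars u p) = (d.prod fun j e => u j ^ e) * coeff d p := by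
  classical
  induction p using induction_on' with
  | monomial e c =>
    rw [scaleVars_monomial, coeff_monomial, coeff_monomial]
    split_ifs with h
    · rw [h]
    · rw [mul_zero]
  | add p q hp hq => rw [map_add, coeff_add, coeff_add, hp, hq, mul_add]

lemma scaleVars_scaleVars (u v : σ → R) (p : MvPolynomial σ R) :
    scaleVars u (scaleVars v p) = scaleVars (u * v) p := by
  rw [← AlgHom.comp_apply]
  congr 1
  refine algHom_ext fun j => ?_
  simp only [scaleVars, aeval_eq_bind₁, AlgHom.coe_comp, Function.comp_apply, bind₁_X_right,
    map_mul, algHom_C, algebraMap_eq, Pi.mul_apply]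
  ring

lemma eq_zero_of_X_zero_add_X_one_mul_eq_zero {q : MvPolynomial (Fin 2) R}
    (h : (X 0 + X 1) * q = 0) : q = 0 := by
  apply (finSuccEquiv R 1).injective
  rw [map_zero, ← (Polynomial.monic_X_add_C (X 0)).mul_right_eq_zero_iff]
  have := congrArg (finSuccEquiv R 1) h
  rwa [map_mul, map_add, finSuccEquiv_X_zero, ← Fin.succ_zero_eq_one, finSuccEquiv_X_succ,
    map_zero] at this

section negX

variable [DecidableEq σ]

noncomputable def negX (i : σ) : MvPolynomial σ R →ₐ[R] MvPolynomial σ R :=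
  scaleVars (Function.update 1 i (-1))

@[simp] lemma negX_X_self (i : σ) : negX i (X i : MvPolynomial σ R) = -X i := by
  simp [negX]

@[simp] lemma negX_X_of_ne {i j : σ} (h : j ≠ i) : negX i (X j : MvPolynomial σ R) = X j := by
  simp [negX, h]

lemma negX_comm (i j : σ) (p : MvPolynomial σ R) : negX i (negX j p) = negX j (negX i p) := by
  rw [negX, negX, scaleVars_scaleVars, scaleVars_scaleVars, mul_comm]

lemma coeff_negX (i : σ) (d : σ →₀ ℕ) (p : MvPolynomial σ R) :
    coeff d (negX i p) = (-1) ^ d i * coeff d p := by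
  rw [negX, coeff_scaleVars, Finsupp.prod_eq_single i (fun j _ hj => by simp [hj]) (by simp),
    Function.update_self]

lemma even_of_mem_support_of_negX_eq (h2 : ∀ a : R, 2 * a = 0 → a = 0) {i : σ}
    {p : MvPolynomial σ R} (hp : negX i p = p) {d : σ →₀ ℕ} (hd : d ∈ p.support) : Even (d i) := by
  by_contra hodd
  have h := congrArg (coeff d) hp
  rw [coeff_negX, (Nat.not_even_iff_odd.mp hodd).neg_one_pow] at h
  exact mem_support_iff.mp hd (h2 _ (by linear_combination -h))

end negX

end MvPolynomial

lemma Submodule.eq_top_of_one_mem_of_forall_mul_mem {R A : Type*} [CommSemiring R] [Semiring A]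
    [Algebra R A] {s : Set A} (hs : Algebra.adjoin R s = ⊤) (M : Submodule R A) (h1 : 1 ∈ M)
    (hmul : ∀ x ∈ s, ∀ m ∈ M, x * m ∈ M) : M = ⊤ := by
  have key : ∀ a ∈ Algebra.adjoin R s, ∀ m ∈ M, a * m ∈ M := by
    intro a ha
    induction ha using Algebra.adjoin_induction with
    | mem x hx => exact hmul x hx
    | algebraMap r => exact fun m hm => Algebra.smul_def r m ▸ M.smul_mem r hm
    | add x y _ _ hx hy => exact fun m hm => (add_mul x y m).symm ▸ M.add_mem (hx m hm) (hy m hm)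
    | mul x y _ _ hx hy => exact fun m hm => (mul_assoc x y m).symm ▸ hx _ (hy m hm)
  refine eq_top_iff.mpr fun a _ => ?_
  simpa using key a (hs ▸ Algebra.mem_top) 1 h1

lemma commute_sq_of_mul_eq_neg {R : Type*} [Ring R] {a b : R} (h : a * b = -(b * a)) :
    Commute a (b ^ 2) := by
  have hab : SemiconjBy a b (-b) := by rw [SemiconjBy, h, neg_mul]
  have := hab.pow_right 2
  rwa [neg_sq] at this

namespace OddPoly

variable {k : Type*} [CommRing k]

lemma X_one_mul_X_zero : X k 1 * X k 0 = -(X k 0 * X k 1) := by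
  refine eq_neg_of_add_eq_zero_right ?_
  simpa [X] using RingQuot.mkAlgHom_rel k (OddRel.anticomm (k := k))

lemma X_zero_mul_X_one : X k 0 * X k 1 = -(X k 1 * X k 0) := by
  rw [X_one_mul_X_zero, neg_neg]

variable (k) in
lemma adjoin_range_X : Algebra.adjoin k (Set.range (X k)) = ⊤ := by
  rw [show Set.range (X k) = RingQuot.mkAlgHom k (OddRel k) '' Set.range (FreeAlgebra.ι k) by
      rw [← Set.range_comp]; rfl,
    Algebra.adjoin_image, FreeAlgebra.adjoin_range_ι, Algebra.map_top,
    (AlgHom.range_eq_top _).mpr (RingQuot.mkAlgHom_surjective k (OddRel k))]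

lemma mem_adjoin_range_X (c : OddPoly k) : c ∈ Algebra.adjoin k (Set.range (X k)) :=
  adjoin_range_X k ▸ Algebra.mem_top

lemma X_sq_mem_center (i : Fin 2) : X k i ^ 2 ∈ Subalgebra.center k (OddPoly k) := by
  refine Subalgebra.mem_center_iff.mpr fun c =>
    (Algebra.commute_of_mem_adjoin_of_forall_mem_commute (mem_adjoin_range_X c) ?_).symm.eq
  rintro _ ⟨j, rfl⟩
  fin_cases i <;> fin_cases j
  · exact (Commute.refl _).pow_left 2
  · exact (commute_sq_of_mul_eq_neg X_one_mul_X_zero).symm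
  · exact (commute_sq_of_mul_eq_neg X_zero_mul_X_one).symm
  · exact (Commute.refl _).pow_left 2

lemma adjoin_X_sq_le_center :
    Algebra.adjoin k {X k 0 ^ 2, X k 1 ^ 2} ≤ Subalgebra.center k (OddPoly k) :=
  Algebra.adjoin_le (Set.insert_subset (X_sq_mem_center 0)
    (Set.singleton_subset_iff.mpr (X_sq_mem_center 1)))

section Representation

local notation "𝒫" => MvPolynomial (Fin 2) k

variable (k) in
noncomputable def rep : OddPoly k →ₐ[k] Module.End k 𝒫 :=
  RingQuot.liftAlgHom k ⟨FreeAlgebra.lift k ![LinearMap.mulLeft k (MvPolynomial.X 0),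
      LinearMap.mulLeft k (MvPolynomial.X 1) ∘ₗ (MvPolynomial.negX 0).toLinearMap], by
    rintro _ _ ⟨⟩
    refine LinearMap.ext fun p => ?_
    simp only [map_add, map_mul, FreeAlgebra.lift_ι_apply, Matrix.cons_val_zero,
      Matrix.cons_val_one, Matrix.cons_val_fin_one, LinearMap.add_apply, Module.End.mul_apply,
      LinearMap.coe_comp, AlgHom.coe_toLinearMap, Function.comp_apply, LinearMap.mulLeft_apply,
      MvPolynomial.negX_X_self, map_zero, LinearMap.zero_apply]
    ring⟩

lemma rep_X_zero : rep k (X k 0) = LinearMap.mulLeft k (MvPolynomial.X 0) := by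
  simp [rep, X]

lemma rep_X_one (p : 𝒫) : rep k (X k 1) p = MvPolynomial.X 1 * MvPolynomial.negX 0 p := by
  simp [rep, X]

variable (k) in
noncomputable def toMvPolynomial : OddPoly k →ₗ[k] 𝒫 :=
  LinearMap.applyₗ 1 ∘ₗ (rep k).toLinearMap

lemma toMvPolynomial_mul (a c : OddPoly k) :
    toMvPolynomial k (a * c) = rep k a (toMvPolynomial k c) := by
  simp [toMvPolynomial]

lemma commute_rep {T : Module.End k 𝒫} (h0 : Commute (rep k (X k 0)) T)
    (h1 : Commute (rep k (X k 1)) T) (c : OddPoly k) :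
    Commute (rep k c) T := by
  have hc : rep k c ∈ Algebra.adjoin k (Set.range (rep k ∘ X k)) := by
    rw [Set.range_comp, Algebra.adjoin_image]
    exact Subalgebra.mem_map.mpr ⟨c, mem_adjoin_range_X c, rfl⟩
  refine (Algebra.commute_of_mem_adjoin_of_forall_mem_commute hc ?_).symm
  rintro _ ⟨i, rfl⟩
  fin_cases i
  exacts [h0.symm, h1.symm]

lemma toMvPolynomial_mul_X_zero (c : OddPoly k) :
    toMvPolynomial k (c * X k 0) =
      MvPolynomial.X 0 * MvPolynomial.negX 1 (toMvPolynomial k c) := by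
  let T := LinearMap.mulLeft k (MvPolynomial.X 0 : 𝒫) ∘ₗ (MvPolynomial.negX 1).toLinearMap
  have hT : Commute (rep k c) T := by
    refine commute_rep (LinearMap.ext fun p => ?_) (LinearMap.ext fun p => ?_) c
    · simp [T, rep_X_zero]
    · simp only [T, Module.End.mul_apply, LinearMap.coe_comp, AlgHom.coe_toLinearMap,
        Function.comp_apply, LinearMap.mulLeft_apply, rep_X_one, map_mul,
        MvPolynomial.negX_X_self, MvPolynomial.negX_comm 1 0 p]
      ring
  have := LinearMap.congr_fun hT.eq 1
  simpa [T, toMvPolynomial_mul, rep_X_zero, toMvPolynomial] using this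

lemma toMvPolynomial_mul_X_one (c : OddPoly k) :
    toMvPolynomial k (c * X k 1) = MvPolynomial.X 1 * toMvPolynomial k c := by
  let T := LinearMap.mulLeft k (MvPolynomial.X 1 : 𝒫)
  have hT : Commute (rep k c) T := by
    refine commute_rep (LinearMap.ext fun p => ?_) (LinearMap.ext fun p => ?_) c
    · simp [T, rep_X_zero, mul_left_comm]
    · simp [T, rep_X_one]
  have := LinearMap.congr_fun hT.eq 1
  simpa [T, toMvPolynomial_mul, rep_X_one, toMvPolynomial] using this

variable (k) in
noncomputable def monomial (d : Fin 2 →₀ ℕ) : OddPoly k := X k 0 ^ d 0 * X k 1 ^ d 1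

lemma X_zero_mul_monomial (d : Fin 2 →₀ ℕ) :
    X k 0 * monomial k d = monomial k (d + Finsupp.single 0 1) := by
  simp [monomial, pow_succ', mul_assoc]

lemma X_one_mul_X_zero_pow (n : ℕ) : X k 1 * X k 0 ^ n = (-1) ^ n * X k 0 ^ n * X k 1 := by
  have h : SemiconjBy (X k 1) (X k 0) (-X k 0) := by
    rw [SemiconjBy, X_one_mul_X_zero]
    exact (neg_mul (X k 0) (X k 1)).symm
  rw [(h.pow_right n).eq]
  exact congrArg (· * X k 1) (neg_pow (X k 0) n)

lemma X_one_mul_monomial (d : Fin 2 →₀ ℕ) :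
    X k 1 * monomial k d = (-1) ^ d 0 * monomial k (d + Finsupp.single 1 1) := by
  simp [monomial, ← mul_assoc, X_one_mul_X_zero_pow, pow_succ']

lemma mul_mem_span_range_monomial {x m : OddPoly k}
    (hx : ∀ d, x * monomial k d ∈ Submodule.span k (Set.range (monomial k)))
    (hm : m ∈ Submodule.span k (Set.range (monomial k))) :
    x * m ∈ Submodule.span k (Set.range (monomial k)) := by
  induction hm using Submodule.span_induction with
  | mem _ hm => obtain ⟨d, rfl⟩ := hm; exact hx d
  | zero => simp
  | add _ _ _ _ hm hm' => exact mul_add x _ _ ▸ Submodule.add_mem _ hm hm'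
  | smul a _ _ hm => exact (mul_smul_comm a x _).symm ▸ Submodule.smul_mem _ a hm

lemma span_range_monomial : Submodule.span k (Set.range (monomial k)) = ⊤ := by
  refine Submodule.eq_top_of_one_mem_of_forall_mul_mem (adjoin_range_X k) _
    (Submodule.subset_span ⟨0, (by simp [monomial] : monomial k 0 = 1)⟩) ?_
  rintro _ ⟨i, rfl⟩ m
  refine mul_mem_span_range_monomial fun d => ?_
  have hd : ∀ e, monomial k e ∈ Submodule.span k (Set.range (monomial k)) :=
    fun e => Submodule.subset_span ⟨e, rfl⟩
  fin_cases i
  · show X k 0 * monomial k d ∈ _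
    rw [X_zero_mul_monomial]
    exact hd _
  · show X k 1 * monomial k d ∈ _
    rcases neg_one_pow_eq_or (OddPoly k) (d 0) with h | h <;>
      simp only [X_one_mul_monomial, h, one_mul, neg_one_mul, Submodule.neg_mem_iff, hd]

lemma toMvPolynomial_X_one_pow (n : ℕ) :
    toMvPolynomial k (X k 1 ^ n) = MvPolynomial.X 1 ^ n := by
  induction n with
  | zero => simp [toMvPolynomial]
  | succ n ih => simp [pow_succ', toMvPolynomial_mul, ih, rep_X_one]

lemma toMvPolynomial_monomial (d : Fin 2 →₀ ℕ) :
    toMvPolynomial k (monomial k d) = MvPolynomial.monomial d 1 := by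
  rw [monomial, toMvPolynomial_mul, toMvPolynomial_X_one_pow, map_pow (rep k), rep_X_zero,
    LinearMap.pow_mulLeft, LinearMap.mulLeft_apply, MvPolynomial.monomial_eq,
    Finsupp.prod_fintype _ _ (fun _ => pow_zero _), Fin.prod_univ_two, MvPolynomial.C_1, one_mul]

variable (k) in
noncomputable def ofMvPolynomial : 𝒫 →ₗ[k] OddPoly k :=
  (MvPolynomial.basisMonomials (Fin 2) k).constr k (monomial k)

lemma ofMvPolynomial_monomial (d : Fin 2 →₀ ℕ) (a : k) :
    ofMvPolynomial k (MvPolynomial.monomial d a) = a • monomial k d := by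
  have : MvPolynomial.monomial d a = a • MvPolynomial.basisMonomials (Fin 2) k d := by
    simp [MvPolynomial.smul_monomial]
  rw [ofMvPolynomial, this, map_smul, Module.Basis.constr_basis]

lemma ofMvPolynomial_eq_sum (p : 𝒫) :
    ofMvPolynomial k p = ∑ d ∈ p.support, p.coeff d • monomial k d := by
  conv_lhs => rw [p.as_sum]
  simp only [map_sum, ofMvPolynomial_monomial]

lemma toMvPolynomial_ofMvPolynomial (p : 𝒫) : toMvPolynomial k (ofMvPolynomial k p) = p := by
  induction p using MvPolynomial.induction_on' with
  | monomial d a =>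
    rw [ofMvPolynomial_monomial, map_smul, toMvPolynomial_monomial, MvPolynomial.smul_monomial,
      smul_eq_mul, mul_one]
  | add p q hp hq => rw [map_add, map_add, hp, hq]

lemma ofMvPolynomial_toMvPolynomial (c : OddPoly k) :
    ofMvPolynomial k (toMvPolynomial k c) = c := by
  obtain ⟨p, rfl⟩ : c ∈ LinearMap.range (ofMvPolynomial k) := by
    rw [ofMvPolynomial, Module.Basis.constr_range, span_range_monomial]
    trivial
  rw [toMvPolynomial_ofMvPolynomial]

end Representation

lemma monomial_mem_adjoin_X_sq {d : Fin 2 →₀ ℕ} (h0 : Even (d 0)) (h1 : Even (d 1)) :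
    monomial k d ∈ Algebra.adjoin k {X k 0 ^ 2, X k 1 ^ 2} := by
  obtain ⟨a, ha⟩ := h0
  obtain ⟨b, hb⟩ := h1
  rw [monomial, ha, hb, ← two_mul, ← two_mul, pow_mul, pow_mul]
  exact mul_mem (pow_mem (Algebra.subset_adjoin (by simp)) a)
    (pow_mem (Algebra.subset_adjoin (by simp)) b)

lemma mem_adjoin_X_sq_of_even {c : OddPoly k}
    (h : ∀ d ∈ (toMvPolynomial k c).support, Even (d 0) ∧ Even (d 1)) :
    c ∈ Algebra.adjoin k {X k 0 ^ 2, X k 1 ^ 2} := by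
  rw [← ofMvPolynomial_toMvPolynomial c, ofMvPolynomial_eq_sum]
  exact Subalgebra.sum_mem _ fun d hd =>
    Subalgebra.smul_mem _ (monomial_mem_adjoin_X_sq (h d hd).1 (h d hd).2) _

theorem mem_adjoin_X_sq_of_commute (h2 : ∀ a : k, 2 * a = 0 → a = 0) {c : OddPoly k}
    (hA : Commute (X k 0 * X k 1) c) (hB : Commute (X k 0 - X k 1) c) :
    c ∈ Algebra.adjoin k {X k 0 ^ 2, X k 1 ^ 2} := by
  set p := toMvPolynomial k c
  have hA' : MvPolynomial.X 0 * (MvPolynomial.X 1 * MvPolynomial.negX 0 p) =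
      MvPolynomial.X 0 * (MvPolynomial.X 1 * MvPolynomial.negX 1 p) := by
    have h := congrArg (toMvPolynomial k) hA.eq
    rw [mul_assoc, toMvPolynomial_mul, toMvPolynomial_mul, ← mul_assoc, toMvPolynomial_mul_X_one,
      toMvPolynomial_mul_X_zero, rep_X_zero, rep_X_one, LinearMap.mulLeft_apply] at h
    linear_combination h
  have h01 : MvPolynomial.negX 0 p = MvPolynomial.negX 1 p := by
    simpa only [MvPolynomial.X_mul_cancel_left_iff] using hA'
  have hB' : (MvPolynomial.X 0 + MvPolynomial.X 1) * (p - MvPolynomial.negX 0 p) = 0 := by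
    have h := congrArg (toMvPolynomial k) hB.eq
    rw [sub_mul, mul_sub, map_sub, map_sub, toMvPolynomial_mul, toMvPolynomial_mul,
      toMvPolynomial_mul_X_zero, toMvPolynomial_mul_X_one, rep_X_zero, rep_X_one,
      LinearMap.mulLeft_apply, ← h01] at h
    linear_combination h
  have h0 : MvPolynomial.negX 0 p = p :=
    (sub_eq_zero.mp (MvPolynomial.eq_zero_of_X_zero_add_X_one_mul_eq_zero hB')).symm
  exact mem_adjoin_X_sq_of_even fun d hd =>
    ⟨MvPolynomial.even_of_mem_support_of_negX_eq h2 h0 hd,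
      MvPolynomial.even_of_mem_support_of_negX_eq h2 (h01 ▸ h0) hd⟩

end OddPoly

theorem stmt11_general (k : Type*) [CommRing k]
    (h2 : ∀ a : k, 2 * a = 0 → a = 0)
    (s : OddPoly k ≃ₐ[k] OddPoly k)
    (hs1 : s (X k 0) = - X k 1)
    (D : OddPoly k →ₗ[k] OddPoly k)
    (hD1 : D (X k 0) = 1) (hD2 : D (X k 1) = 1)
    (hDL : ∀ f g : OddPoly k, D (f * g) = D f * g + s f * D g)
 :
    ({c : OddPoly k | ∀ a ∈ LinearMap.ker D, a * c = c * a} =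
      (Algebra.adjoin k ({X k 0 ^ 2, X k 1 ^ 2} : Set (OddPoly k)) : Set (OddPoly k))) ∧
    (∀ ξ : OddPoly k →+ OddPoly k,
      (∀ a ∈ LinearMap.ker D, ∀ m : OddPoly k, ξ (a * m) = a * ξ m) →
      (∀ m r : OddPoly k, ξ (m * r) = ξ m * r) →
      ∃! c : OddPoly k,
        c ∈ Algebra.adjoin k ({X k 0 ^ 2, X k 1 ^ 2} : Set (OddPoly k)) ∧
        ∀ m : OddPoly k, ξ m = c * m) := by
  have hA : X k 0 * X k 1 ∈ LinearMap.ker D := by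
    rw [LinearMap.mem_ker, hDL, hD1, hD2, hs1, one_mul, mul_one, add_neg_cancel]
  have hB : X k 0 - X k 1 ∈ LinearMap.ker D := by
    rw [LinearMap.mem_ker, map_sub, hD1, hD2, sub_self]
  have hcent : {c : OddPoly k | ∀ a ∈ LinearMap.ker D, a * c = c * a} =
      (Algebra.adjoin k ({X k 0 ^ 2, X k 1 ^ 2} : Set (OddPoly k)) : Set (OddPoly k)) :=
    Set.Subset.antisymm
      (fun c hc => OddPoly.mem_adjoin_X_sq_of_commute h2 (hc _ hA) (hc _ hB))
      (fun c hc a _ => Subalgebra.mem_center_iff.mp (OddPoly.adjoin_X_sq_le_center hc) a)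
  refine ⟨hcent, fun ξ hL hR => ⟨ξ 1, ⟨?_, fun m => by simpa using hR 1 m⟩,
    fun c hc => by simpa using (hc.2 1).symm⟩⟩
  rw [← SetLike.mem_coe, ← hcent]
  intro a ha
  calc a * ξ 1 = ξ (a * 1) := (hL a ha 1).symm
    _ = ξ (1 * a) := by rw [mul_one, one_mul]
    _ = ξ 1 * a := hR 1 a

/-- If `2` is a non-zero-divisor in `k`, the centralizer of `ker ∂` in `R`
equals the `k`-subalgebra `C` generated by `x₁²` and `x₂²`; consequently,
every additive, left `R^s`-linear and right `R`-linear endomorphism of `R`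
is left multiplication by a unique element of `C`. -/
theorem stmt11 (k : Type*) [CommRing k]
    (h2 : ∀ a : k, 2 * a = 0 → a = 0)
    (s : OddPoly k ≃ₐ[k] OddPoly k)
    (hs1 : s (X k 0) = - X k 1) (hs2 : s (X k 1) = - X k 0)
    (D : OddPoly k →ₗ[k] OddPoly k)
    (hD0 : D 1 = 0) (hD1 : D (X k 0) = 1) (hD2 : D (X k 1) = 1)
    (hDL : ∀ f g : OddPoly k, D (f * g) = D f * g + s f * D g)
 :
    ({c : OddPoly k | ∀ a ∈ LinearMap.ker D, a * c = c * a} =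
      (Algebra.adjoin k ({X k 0 ^ 2, X k 1 ^ 2} : Set (OddPoly k)) : Set (OddPoly k))) ∧
    (∀ ξ : OddPoly k →+ OddPoly k,
      (∀ a ∈ LinearMap.ker D, ∀ m : OddPoly k, ξ (a * m) = a * ξ m) →
      (∀ m r : OddPoly k, ξ (m * r) = ξ m * r) →
      ∃! c : OddPoly k,
        c ∈ Algebra.adjoin k ({X k 0 ^ 2, X k 1 ^ 2} : Set (OddPoly k)) ∧
        ∀ m : OddPoly k, ξ m = c * m) :=
  stmt11_general k h2 s hs1 D hD1 hD2 hDL
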